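/- arXiv:2502.19141 — 4 statements merged into one kernel-verified Lean document; each statement's English description precedes it below -/
import Mathlib

section
/- Let A ∈ F_q[X] be an additive polynomial that is not of the form aX^{p^h} with a ∈ F_q and h ≥ 0. Then for every integer n ≥ 1, one has s_A(np) ∈ {s_A(n), p·s_A(n)}, where p is the characteristic of F_q. -/
open Polynomial Filter

/-- A polynomial over a field of characteristic `p` is additive iff every
monomial with nonzero coefficient has exponent a power of `p`
(equivalently, `A(X) = ∑ aᵢ X^(pⁱ)`). -/
def IsAdditivePoly {F : Type*} [Field F] (p : ℕ) (A : Polynomial F) : Prop :=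
  ∀ i : ℕ, A.coeff i ≠ 0 → ∃ h : ℕ, i = p ^ h

/-- `polyIter P n` is the `n`-fold composition `P^{(n)}` of `P` with itself,
with the convention `P^{(0)} = X`. -/
noncomputable def polyIter {F : Type*} [Field F] (P : Polynomial F) (n : ℕ) : Polynomial F :=
  (fun Q => P.comp Q)^[n] Polynomial.X

/-- `SplitsIn P j` : `P` splits completely over `F_{q^j}`, i.e. every root of
`P` in an algebraic closure of `F` lies in the subfield with `q^j` elements,
where `q = #F`. -/
def SplitsIn {F : Type*} [Field F] [Fintype F] (P : Polynomial F) (j : ℕ) : Prop :=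
  ∀ y : AlgebraicClosure F, Polynomial.aeval y P = 0 → y ^ Fintype.card F ^ j = y

/-- `sDeg P n` : the degree over `F_q` of the splitting field of the `n`-th
iterate `P^{(n)}`, i.e. the least positive `j` such that `P^{(n)}` splits
completely in `F_{q^j}`. -/
noncomputable def sDeg {F : Type*} [Field F] [Fintype F] (P : Polynomial F) (n : ℕ) : ℕ :=
  sInf {j : ℕ | 0 < j ∧ SplitsIn (polyIter P n) j}

open IntermediateField

lemma aeval_polyIter {F : Type*} [Field F] {K : Type*} [CommSemiring K] [Algebra F K]
    (P : Polynomial F) (m : ℕ) (x : K) :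
    Polynomial.aeval x (polyIter P m) = (fun y => Polynomial.aeval y P)^[m] x := by
  induction m with
  | zero => simp [polyIter]
  | succ k ih =>
    rw [polyIter, Function.iterate_succ_apply', aeval_comp,
      show (fun Q => P.comp Q)^[k] Polynomial.X = polyIter P k from rfl, ih,
      Function.iterate_succ_apply']

lemma pow_pow_mul {K : Type*} [Monoid K] (y : K) (q a : ℕ) (h : y ^ q ^ a = y) (k : ℕ) :
    y ^ q ^ (a * k) = y := by
  induction k with
  | zero => simp
  | succ k ih => rw [Nat.mul_succ, pow_add, pow_mul, ih, h]

lemma pow_pow_mod {K : Type*} [Monoid K] (y : K) (q a b : ℕ) (ha : y ^ q ^ a = y)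
    (hb : y ^ q ^ b = y) : y ^ q ^ (a % b) = y := by
  have h1 : y ^ q ^ (b * (a / b)) = y := pow_pow_mul y q b hb (a / b)
  calc y ^ q ^ (a % b) = (y ^ q ^ (b * (a / b))) ^ q ^ (a % b) := by rw [h1]
    _ = y ^ q ^ (b * (a / b) + a % b) := by rw [← pow_mul, ← pow_add]
    _ = y ^ q ^ a := by rw [Nat.div_add_mod]
    _ = y := ha

lemma exists_pow_card_pow_eq (F : Type*) [Field F] [Fintype F] (y : AlgebraicClosure F) :
    ∃ d : ℕ, 0 < d ∧ y ^ Fintype.card F ^ d = y := by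
  have hy : IsIntegral F y := Algebra.IsIntegral.isIntegral y
  haveI : FiniteDimensional F F⟮y⟯ := IntermediateField.adjoin.finiteDimensional hy
  haveI : Finite F⟮y⟯ := Module.finite_of_finite F
  haveI : Fintype F⟮y⟯ := Fintype.ofFinite _
  set z : F⟮y⟯ := IntermediateField.AdjoinSimple.gen F y with hz
  refine ⟨Module.finrank F F⟮y⟯, Module.finrank_pos, ?_⟩
  have h1 : z ^ Fintype.card F ^ Module.finrank F F⟮y⟯ = z := by
    rw [← Module.card_eq_pow_finrank (K := F) (V := F⟮y⟯)]
    exact FiniteField.pow_card z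
  have h2 : (z : AlgebraicClosure F) = y := rfl
  calc y ^ Fintype.card F ^ Module.finrank F F⟮y⟯
      = ((z ^ Fintype.card F ^ Module.finrank F F⟮y⟯ : F⟮y⟯) : AlgebraicClosure F) := by
        push_cast [h2]; ring
    _ = y := by rw [h1, h2]

lemma splitsIn_nonempty {F : Type*} [Field F] [Fintype F] (P : Polynomial F) (hP : P ≠ 0) :
    {j : ℕ | 0 < j ∧ SplitsIn P j}.Nonempty := by
  classical
  choose d hd hfd using fun y : AlgebraicClosure F => exists_pow_card_pow_eq F y
  set R := (P.aroots (AlgebraicClosure F)).toFinset with hR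
  refine ⟨∏ y ∈ R, d y, Finset.prod_pos fun y _ => hd y, ?_⟩
  intro y hy
  have hyR : y ∈ R := by
    rw [hR, Multiset.mem_toFinset, Polynomial.mem_aroots]
    exact ⟨hP, hy⟩
  obtain ⟨k, hk⟩ := Finset.dvd_prod_of_mem d hyR
  rw [hk]
  exact pow_pow_mul y _ (d y) (hfd y) k

lemma splitsIn_sInf_dvd {F : Type*} [Field F] [Fintype F] (P : Polynomial F) (n : ℕ)
    (hne : {j : ℕ | 0 < j ∧ SplitsIn (polyIter P n) j}.Nonempty)
    {j : ℕ} (hsp : SplitsIn (polyIter P n) j) :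
    sDeg P n ∣ j := by
  have hmem := Nat.sInf_mem hne
  set L := sDeg P n with hL
  have hL0 : 0 < L := hmem.1
  have hr : SplitsIn (polyIter P n) (j % L) := fun y hy =>
    pow_pow_mod y _ j L (hsp y hy) (hmem.2 y hy)
  rcases Nat.eq_zero_or_pos (j % L) with h0 | hpos
  · exact Nat.dvd_of_mod_eq_zero h0
  · have h1 : L ≤ j % L := Nat.sInf_le ⟨hpos, hr⟩
    have h2 : j % L < L := Nat.mod_lt j hL0
    omega

theorem sDeg_mul_char (p : ℕ) [Fact p.Prime] (F : Type*) [Field F] [Fintype F] [CharP F p]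
    (A : Polynomial F) (hA : IsAdditivePoly p A)
    (hexc : ¬ ∃ (a : F) (h : ℕ), A = Polynomial.C a * Polynomial.X ^ p ^ h) :
    ∀ n : ℕ, 1 ≤ n →
      sDeg A (n * p) = sDeg A n ∨ sDeg A (n * p) = p * sDeg A n := by
  intro n hn
  classical
  set K := AlgebraicClosure F with hK
  haveI : CharP K p := charP_of_injective_algebraMap (algebraMap F K).injective p
  obtain ⟨d, hdp, hcard⟩ := FiniteField.card F p
  set q := Fintype.card F with hq
  set f : K → K := fun x => Polynomial.aeval x A with hf
  -- additivity
  have h_add : ∀ x y : K, f (x + y) = f x + f y := by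
    intro x y
    rw [hf]
    simp only
    rw [Polynomial.aeval_eq_sum_range, Polynomial.aeval_eq_sum_range,
      Polynomial.aeval_eq_sum_range, ← Finset.sum_add_distrib]
    refine Finset.sum_congr rfl fun i _ => ?_
    by_cases hc : A.coeff i = 0
    · simp [hc]
    · obtain ⟨h, rfl⟩ := hA i hc
      rw [add_pow_char_pow, smul_add]
  have h_zero : f 0 = 0 := by
    have := h_add 0 0
    rw [add_zero] at this
    exact (left_eq_add.mp this)
  have h_sub : ∀ x y : K, f (x - y) = f x - f y := by
    intro x y
    have hneg : f (-y) = - f y := by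
      have := h_add y (-y)
      rw [add_neg_cancel, h_zero] at this
      exact (neg_eq_of_add_eq_zero_right this.symm).symm
    rw [sub_eq_add_neg, h_add, hneg, sub_eq_add_neg]
  -- frobenius commutes with f
  have h_frob : ∀ x : K, (f x) ^ q = f (x ^ q) := by
    intro x
    rw [hf]; simp only
    rw [Polynomial.aeval_eq_sum_range, Polynomial.aeval_eq_sum_range, hcard]
    rw [show ((∑ i ∈ Finset.range (A.natDegree + 1), A.coeff i • x ^ i) ^ p ^ (d : ℕ))
        = iterateFrobenius K p d (∑ i ∈ Finset.range (A.natDegree + 1), A.coeff i • x ^ i)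
        from rfl, map_sum]
    refine Finset.sum_congr rfl fun i _ => ?_
    rw [iterateFrobenius_def, Algebra.smul_def, Algebra.smul_def, mul_pow, ← map_pow,
      ← hcard, FiniteField.pow_card, ← pow_mul, mul_comm i, pow_mul]
  have h_frob_pow : ∀ (m : ℕ) (x : K), (f x) ^ q ^ m = f (x ^ q ^ m) := by
    intro m
    induction m with
    | zero => intro x; simp
    | succ k ih =>
      intro x
      rw [pow_succ, pow_mul, ih, h_frob, ← pow_mul, ← pow_succ]
  -- A nonconstant, iterates nonzero
  have hdeg : 0 < A.natDegree := by
    rcases Nat.eq_zero_or_pos A.natDegree with h0 | h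
    · exfalso
      apply hexc
      have hc0 : A.coeff 0 = 0 := by
        by_contra hc
        obtain ⟨h, hh⟩ := hA 0 hc
        exact (pow_ne_zero h (Nat.Prime.ne_zero hdp)) hh.symm
      refine ⟨0, 0, ?_⟩
      rw [Polynomial.eq_C_of_natDegree_eq_zero h0, hc0]
      simp
    · exact h
  have hIterdeg : ∀ m : ℕ, (polyIter A m).natDegree = A.natDegree ^ m := by
    intro m
    induction m with
    | zero => simp [polyIter]
    | succ k ih =>
      rw [polyIter, Function.iterate_succ_apply', Polynomial.natDegree_comp,
        show (fun Q => A.comp Q)^[k] Polynomial.X = polyIter A k from rfl, ih, ← pow_succ']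
  have hIter_ne : ∀ m : ℕ, polyIter A m ≠ 0 := by
    intro m
    apply Polynomial.ne_zero_of_natDegree_gt (n := 0)
    rw [hIterdeg]
    exact pow_pos hdeg m
  have hne : ∀ m : ℕ, {j : ℕ | 0 < j ∧ SplitsIn (polyIter A m) j}.Nonempty :=
    fun m => splitsIn_nonempty _ (hIter_ne m)
  set s := sDeg A n with hs
  set L := sDeg A (n * p) with hLdef
  have hsmem : s ∈ {j : ℕ | 0 < j ∧ SplitsIn (polyIter A n) j} := Nat.sInf_mem (hne n)
  have hLmem : L ∈ {j : ℕ | 0 < j ∧ SplitsIn (polyIter A (n * p)) j} := Nat.sInf_mem (hne (n * p))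
  have hs0 : 0 < s := hsmem.1
  -- every root of the n-th iterate is a root of the (n*p)-th iterate
  have hroot : ∀ x : K, Polynomial.aeval x (polyIter A n) = 0 →
      Polynomial.aeval x (polyIter A (n * p)) = 0 := by
    intro x hx
    rw [aeval_polyIter] at hx ⊢
    have hnp : n * p = (n * p - n) + n := by
      have hp1 : 1 ≤ p := (Fact.out : p.Prime).one_lt.le
      have : n ≤ n * p := Nat.le_mul_of_pos_right n (Fact.out : p.Prime).pos
      omega
    rw [hnp, Function.iterate_add_apply]
    rw [show (fun y : K => Polynomial.aeval y A) = f from rfl] at hx ⊢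
    rw [hx]
    exact Function.iterate_fixed h_zero _
  -- hence s ∣ L
  have hsL : s ∣ L := splitsIn_sInf_dvd A n (hne n) (fun y hy => hLmem.2 y (hroot y hy))
  -- the operator φ = Frobenius^(d*s) on K
  set φE : Module.End ℤ K :=
    (iterateFrobenius K p (d * s)).toAddMonoidHom.toIntLinearMap with hφE
  have hφ : ∀ x : K, φE x = x ^ q ^ s := by
    intro x
    show x ^ p ^ ((d : ℕ) * s) = x ^ q ^ s
    rw [hcard, ← pow_mul]
  haveI : CharP (Module.End ℤ K) p := by
    constructor
    intro m
    rw [← CharP.cast_eq_zero_iff K p m]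
    constructor
    · intro h
      have h1 := LinearMap.congr_fun h (1 : K)
      simpa [Module.End.natCast_apply, nsmul_eq_mul] using h1
    · intro h
      ext x
      simp [Module.End.natCast_apply, nsmul_eq_mul, h]
  set g : K → K := fun x => x ^ q ^ s - x with hg
  have hgE : ⇑(φE - 1) = g := by
    funext x
    rw [hg]
    simp only [LinearMap.sub_apply, Module.End.one_apply, hφ x]
  -- (φ - 1)^p = φ^p - 1
  have hpow : (φE - 1) ^ p = φE ^ p - 1 := by
    have := sub_pow_char_of_commute (R := Module.End ℤ K) (p := p) (x := φE) (y := 1)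
      (Commute.one_right φE)
    simpa using this
  -- φ^p is raising to the q^(s*p)
  have hφp : ∀ x : K, (φE ^ p) x = x ^ q ^ (s * p) := by
    intro x
    rw [Module.End.pow_apply]
    have hiter : ⇑φE = ⇑(iterateFrobenius K p ((d : ℕ) * s)) := rfl
    rw [hiter, ← coe_iterateFrobenius_mul, iterateFrobenius_def, hcard]
    rw [← pow_mul]
    ring_nf
  -- f commutes with g
  have h_comm : ∀ x : K, f (g x) = g (f x) := by
    intro x
    rw [hg]
    simp only
    rw [h_sub, h_frob_pow s]
  have h_commF : Function.Commute f g := fun x => h_comm x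
  -- key induction
  have hsplit_n : ∀ x : K, (f^[n]) x = 0 → g x = 0 := by
    intro x hx
    have := hsmem.2 x (by rw [aeval_polyIter]; exact hx)
    rw [hg]
    simp only
    rw [this, sub_self]
  have hkey : ∀ (k : ℕ) (x : K), (f^[n * k]) x = 0 → (g^[k]) x = 0 := by
    intro k
    induction k with
    | zero => intro x hx; simpa using hx
    | succ k ih =>
      intro x hx
      rw [Nat.mul_succ, Function.iterate_add_apply] at hx
      have h1 : (g^[k]) ((f^[n]) x) = 0 := ih _ hx
      have h2 : (f^[n]) ((g^[k]) x) = 0 := by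
        rw [((h_commF.iterate_left n).iterate_right k) x, h1]
      have h3 : g ((g^[k]) x) = 0 := hsplit_n _ h2
      rw [Function.iterate_succ_apply', h3]
  -- deduce SplitsIn (polyIter A (n*p)) (s*p)
  have hsp : SplitsIn (polyIter A (n * p)) (s * p) := by
    intro x hx
    rw [aeval_polyIter] at hx
    have h1 : (g^[p]) x = 0 := hkey p x hx
    have h2 : ((φE - 1) ^ p) x = 0 := by
      rw [Module.End.pow_apply, hgE, h1]
    rw [hpow, LinearMap.sub_apply, Module.End.one_apply, sub_eq_zero] at h2
    rw [← hφp x, h2]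
  have hLsp : L ∣ s * p := splitsIn_sInf_dvd A (n * p) (hne (n * p)) hsp
  -- conclude
  obtain ⟨m, hm⟩ := hsL
  have hmp : m ∣ p := by
    rw [hm] at hLsp
    exact (mul_dvd_mul_iff_left hs0.ne').mp hLsp
  rcases ((Fact.out : p.Prime).eq_one_or_self_of_dvd m hmp) with h1 | h1
  · left; rw [hm, h1, mul_one]
  · right; rw [hm, h1, mul_comm]
end

section
/- Let A ∈ F_q[X] be an additive polynomial that is not of the form aX^{p^h} with a ∈ F_q and h ≥ 0. Then for every integer n ≥ 1 there exists an integer i with 0 ≤ i < log_p(n) + 1 (equivalently, p^i < p·n) such that s_A(n) = s_A(1)·p^i. -/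
open Polynomial Filter

section Aux

lemma polyIter_succ {F : Type*} [Field F] (A : Polynomial F) (n : ℕ) :
    polyIter A (n + 1) = A.comp (polyIter A n) :=
  Function.iterate_succ_apply' _ _ _

lemma polyIter_zero {F : Type*} [Field F] (A : Polynomial F) :
    polyIter A 0 = Polynomial.X := rfl

lemma polyIter_one {F : Type*} [Field F] (A : Polynomial F) :
    polyIter A 1 = A := by
  rw [polyIter_succ, polyIter_zero, comp_X]

lemma polyIter_succ' {F : Type*} [Field F] (A : Polynomial F) (n : ℕ) :
    polyIter A (n + 1) = (polyIter A n).comp A := by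
  induction n with
  | zero => rw [polyIter_one, polyIter_zero, X_comp]
  | succ k ih =>
      calc polyIter A (k + 1 + 1) = A.comp (polyIter A (k + 1)) := polyIter_succ _ _
        _ = A.comp ((polyIter A k).comp A) := by rw [ih]
        _ = (A.comp (polyIter A k)).comp A := (comp_assoc ..).symm
        _ = (polyIter A (k + 1)).comp A := by rw [← polyIter_succ]

/-- iterating the `Q^a`-power identity along a divisibility. -/
lemma pow_pow_of_dvd {K : Type*} [CommMonoid K] {y : K} {Q a b : ℕ}
    (h : y ^ Q ^ a = y) (hd : a ∣ b) : y ^ Q ^ b = y := by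
  obtain ⟨c, rfl⟩ := hd
  induction c with
  | zero => simp
  | succ k ih =>
      have : a * (k + 1) = a * k + a := by ring
      rw [this, pow_add, pow_mul, ih, h]

end Aux

theorem sDeg_eq_sDeg_one_mul_pow (p : ℕ) [Fact p.Prime] (F : Type*) [Field F] [Fintype F]
    [CharP F p] (A : Polynomial F) (hA : IsAdditivePoly p A)
    (hexc : ¬ ∃ (a : F) (h : ℕ), A = Polynomial.C a * Polynomial.X ^ p ^ h) :
    ∀ n : ℕ, 1 ≤ n → ∃ i : ℕ, p ^ i < p * n ∧ sDeg A n = sDeg A 1 * p ^ i := by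
  intro n hn
  have hp : p.Prime := Fact.out
  set K := AlgebraicClosure F with hK
  set q := Fintype.card F with hqdef
  haveI : CharP K p := charP_of_injective_algebraMap (algebraMap F K).injective p
  obtain ⟨f', -, hq'⟩ := FiniteField.card F p
  set f : ℕ := (f' : ℕ) with hf
  have hq : q = p ^ f := hq'
  have hfpos : 0 < f := f'.2
  have hpow_frob : ∀ (x : K) (a : ℕ), iterateFrobenius K p (f * a) x = x ^ q ^ a := by
    intro x a
    rw [iterateFrobenius_def, hq, ← pow_mul]
  have pow_q_pow : ∀ (x : K) (a b : ℕ), (x ^ q ^ a) ^ q ^ b = x ^ q ^ (a + b) := by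
    intro x a b
    rw [← pow_mul, ← pow_add]
  -- A is nonzero
  have hA0 : A ≠ 0 := by
    intro h
    exact hexc ⟨0, 0, by simp [h]⟩
  -- A has positive degree
  have hAdeg : 0 < A.natDegree := by
    rcases Nat.eq_zero_or_pos A.natDegree with h | h
    · exfalso
      have hC : A = Polynomial.C (A.coeff 0) := Polynomial.eq_C_of_natDegree_eq_zero h
      have hc0 : A.coeff 0 ≠ 0 := by
        intro hc; exact hA0 (by rw [hC, hc, map_zero])
      obtain ⟨e, he⟩ := hA 0 hc0
      have := pow_pos hp.pos e
      omega
    · exact h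
  -- iterates have positive degree, hence are nonzero
  have hIdeg : ∀ k, 0 < (polyIter A k).natDegree := by
    intro k
    induction k with
    | zero => simp [polyIter_zero]
    | succ m ih =>
        rw [polyIter_succ, natDegree_comp]
        exact Nat.mul_pos hAdeg ih
  have hIne : ∀ k, polyIter A k ≠ 0 := by
    intro k h
    have := hIdeg k
    rw [h] at this
    simp at this
  -- the q^j power map commutes with aeval of polynomials over F
  have frob_fix : ∀ (j : ℕ) (c : F), c ^ q ^ j = c := by
    intro j c
    exact pow_pow_of_dvd (a := 1) (by simpa using FiniteField.pow_card c) (one_dvd j)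
  have aeval_pow : ∀ (P : Polynomial F) (y : K) (j : ℕ),
      (Polynomial.aeval (y ^ q ^ j) P) = (Polynomial.aeval y P) ^ q ^ j := by
    intro P y j
    set σ : K →+* K := iterateFrobenius K p (f * j) with hσ
    have hσfun : ∀ x : K, σ x = x ^ q ^ j := fun x => hpow_frob x j
    have hcomm : ∀ (c : F) (x : K), σ (c • x) = c • σ x := by
      intro c x
      rw [Algebra.smul_def, Algebra.smul_def, map_mul]
      congr 1
      rw [hσfun, ← map_pow, frob_fix j c]
    set ψ : K →ₐ[F] K := AlgHom.mk' σ hcomm with hψ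
    have := aeval_algHom_apply ψ y P
    have hψfun : ∀ x : K, ψ x = x ^ q ^ j := hσfun
    rw [hψfun, hψfun] at this
    exact this
  -- additivity of evaluation
  have haddA : ∀ x y : K, Polynomial.aeval (x + y) A
      = Polynomial.aeval x A + Polynomial.aeval y A := by
    intro x y
    rw [Polynomial.aeval_eq_sum_range, Polynomial.aeval_eq_sum_range,
      Polynomial.aeval_eq_sum_range, ← Finset.sum_add_distrib]
    refine Finset.sum_congr rfl ?_
    intro i _
    rcases eq_or_ne (A.coeff i) 0 with h | h
    · simp [h]
    · obtain ⟨e, rfl⟩ := hA i h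
      rw [add_pow_char_pow, smul_add]
  have haddI : ∀ (k : ℕ) (x y : K), Polynomial.aeval (x + y) (polyIter A k)
      = Polynomial.aeval x (polyIter A k) + Polynomial.aeval y (polyIter A k) := by
    intro k
    induction k with
    | zero => intro x y; simp [polyIter_zero]
    | succ m ih =>
        intro x y
        rw [polyIter_succ, aeval_comp, aeval_comp, aeval_comp, ih, haddA]
  have hzeroA : Polynomial.aeval (0 : K) A = 0 := by
    have := haddA 0 0
    rw [add_zero] at this
    exact (left_eq_add.mp this)
  have hzeroI : ∀ k, Polynomial.aeval (0 : K) (polyIter A k) = 0 := by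
    intro k
    induction k with
    | zero => simp [polyIter_zero]
    | succ m ih => rw [polyIter_succ, aeval_comp, ih, hzeroA]
  have hsubI : ∀ (k : ℕ) (x y : K), Polynomial.aeval (x - y) (polyIter A k)
      = Polynomial.aeval x (polyIter A k) - Polynomial.aeval y (polyIter A k) := by
    intro k x y
    have := haddI k (x - y) y
    rw [sub_add_cancel] at this
    rw [eq_sub_iff_add_eq, ← this]
  -- every element of K lies in a finite subfield
  have alg_elem : ∀ y : K, ∃ j : ℕ, 0 < j ∧ y ^ q ^ j = y := by
    intro y
    have hyalg : IsIntegral F y := Algebra.IsIntegral.isIntegral y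
    set P := minpoly F y with hP
    have hP0 : P ≠ 0 := minpoly.ne_zero hyalg
    have hroot : ∀ k : ℕ, (y ^ q ^ k) ∈ P.rootSet K := by
      intro k
      rw [Polynomial.mem_rootSet]
      refine ⟨hP0, ?_⟩
      rw [aeval_pow, minpoly.aeval]
      exact zero_pow (by positivity)
    have hfin : Finite (P.rootSet K) := Set.Finite.to_subtype (P.rootSet_finite K)
    obtain ⟨k, l, hne, hkl⟩ :=
      Finite.exists_ne_map_eq_of_infinite (fun k : ℕ => (⟨y ^ q ^ k, hroot k⟩ : P.rootSet K))
    have hkl' : y ^ q ^ k = y ^ q ^ l := congrArg Subtype.val hkl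
    rcases hne.lt_or_gt with h | h
    · refine ⟨l - k, by omega, ?_⟩
      apply (iterateFrobenius K p (f * k)).injective
      have e1 : iterateFrobenius K p (f * k) (y ^ q ^ (l - k)) = y ^ q ^ l := by
        rw [hpow_frob, pow_q_pow]
        have : l - k + k = l := by omega
        rw [this]
      rw [e1, hpow_frob, hkl']
    · refine ⟨k - l, by omega, ?_⟩
      apply (iterateFrobenius K p (f * l)).injective
      have e1 : iterateFrobenius K p (f * l) (y ^ q ^ (k - l)) = y ^ q ^ k := by
        rw [hpow_frob, pow_q_pow]
        have : k - l + l = k := by omega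
        rw [this]
      rw [e1, hpow_frob, hkl'.symm]
  -- the sets S_k are nonempty
  have hSne : ∀ k : ℕ, {j : ℕ | 0 < j ∧ SplitsIn (polyIter A k) j}.Nonempty := by
    intro k
    choose g hg1 hg2 using alg_elem
    set T := ((polyIter A k).rootSet_finite K).toFinset with hT
    refine ⟨∏ y ∈ T, g y, Finset.prod_pos fun y _ => hg1 y, ?_⟩
    intro y hy
    have hyT : y ∈ T := by
      rw [hT, Set.Finite.mem_toFinset, Polynomial.mem_rootSet]
      exact ⟨hIne k, hy⟩
    exact pow_pow_of_dvd (hg2 y) (Finset.dvd_prod_of_mem g hyT)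
  -- sInf membership and divisibility structure
  have hmem : ∀ k : ℕ, sDeg A k ∈ {j : ℕ | 0 < j ∧ SplitsIn (polyIter A k) j} :=
    fun k => Nat.sInf_mem (hSne k)
  have hdvd_all : ∀ (k j : ℕ), 0 < j → SplitsIn (polyIter A k) j → sDeg A k ∣ j := by
    intro k j hj hsp
    set d := sDeg A k with hd
    obtain ⟨hdpos, hdsp⟩ := hmem k
    have hr : SplitsIn (polyIter A k) (j % d) := by
      intro y hy
      have h1 : y ^ q ^ (d * (j / d)) = y := pow_pow_of_dvd (hdsp y hy) (dvd_mul_right _ _)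
      have h2 : y ^ q ^ j = (y ^ q ^ (d * (j / d))) ^ q ^ (j % d) := by
        rw [← pow_mul, ← pow_add, Nat.div_add_mod]
      rw [h1] at h2
      rw [← h2, hsp y hy]
    by_contra hnd
    have hrpos : 0 < j % d := by
      rcases Nat.eq_zero_or_pos (j % d) with h | h
      · exact absurd (Nat.dvd_of_mod_eq_zero h) hnd
      · exact h
    have : d ≤ j % d := Nat.sInf_le ⟨hrpos, hr⟩
    have : j % d < d := Nat.mod_lt _ hdpos
    omega
  -- W_1 ⊆ W_n, hence sDeg A 1 ∣ sDeg A n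
  have hd1 : 0 < sDeg A 1 ∧ SplitsIn (polyIter A 1) 1 → True := fun _ => trivial
  obtain ⟨hd1pos, hd1sp⟩ := hmem 1
  have hroot1 : ∀ y : K, Polynomial.aeval y A = 0 → y ^ q ^ sDeg A 1 = y := by
    intro y hy
    exact hd1sp y (by rwa [polyIter_one])
  have hsub_S : SplitsIn (polyIter A n) (sDeg A n) → SplitsIn (polyIter A 1) (sDeg A n) := by
    intro hsp y hy
    apply hsp
    obtain ⟨n', rfl⟩ : ∃ n', n = n' + 1 := ⟨n - 1, by omega⟩
    rw [polyIter_succ', aeval_comp]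
    rw [polyIter_one] at hy
    rw [hy, hzeroI]
  obtain ⟨hdnpos, hdnsp⟩ := hmem n
  have hdvd1 : sDeg A 1 ∣ sDeg A n := hdvd_all 1 (sDeg A n) hdnpos (hsub_S hdnsp)
  -- the key divisibility: sDeg A n ∣ sDeg A 1 * p ^ m  with m = clog p n
  set d₁ := sDeg A 1 with hd₁
  set Q := q ^ d₁ with hQ
  have hQe : Q = p ^ (f * d₁) := by rw [hQ, hq, pow_mul]

  -- endomorphism ring setup
  set ψ : Module.End ℤ K := (iterateFrobenius K p (f * d₁)).toAddMonoidHom.toIntLinearMap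
    with hψ
  have hψfun : ∀ x : K, ψ x = x ^ Q := by
    intro x
    show iterateFrobenius K p (f * d₁) x = x ^ Q
    rw [hpow_frob, hQ]
  haveI : CharP (Module.End ℤ K) p := by
    constructor
    intro a
    constructor
    · intro h
      have := congrArg (fun g : Module.End ℤ K => g (1 : K)) h
      simp only [Module.End.natCast_apply, LinearMap.zero_apply] at this
      have : (a : K) = 0 := by rwa [nsmul_eq_mul, mul_one] at this
      exact (CharP.cast_eq_zero_iff K p a).mp this
    · intro h
      ext x
      simp only [Module.End.natCast_apply, LinearMap.zero_apply]
      have : (a : K) = 0 := (CharP.cast_eq_zero_iff K p a).mpr h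
      rw [nsmul_eq_mul, this, zero_mul]
  set u : Module.End ℤ K := ψ - 1 with hu
  have hufun : ∀ x : K, u x = x ^ Q - x := by
    intro x
    rw [hu, LinearMap.sub_apply, Module.End.one_apply, hψfun]
  have hψpow : ∀ (k : ℕ) (x : K), (ψ ^ k) x = x ^ Q ^ k := by
    intro k
    induction k with
    | zero => intro x; simp
    | succ m ih =>
        intro x
        rw [pow_succ', Module.End.mul_apply, ih, hψfun, ← pow_mul, ← pow_succ]
  have ukill : ∀ (k : ℕ) (y : K), Polynomial.aeval y (polyIter A k) = 0 → (u ^ k) y = 0 := by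
    intro k
    induction k with
    | zero =>
        intro y hy
        rw [polyIter_zero, aeval_X] at hy
        simpa using hy
    | succ m ih =>
        intro y hy
        set z := Polynomial.aeval y (polyIter A m) with hz
        have hzA : Polynomial.aeval z A = 0 := by
          rw [hz, ← aeval_comp, ← polyIter_succ, hy]
        have hzQ : z ^ Q = z := hroot1 z hzA
        have hu_root : Polynomial.aeval (u y) (polyIter A m) = 0 := by
          rw [hufun, hsubI, aeval_pow, ← hz, hzQ, sub_self]
        have := ih (u y) hu_root
        rw [pow_succ, Module.End.mul_apply]
        exact this
  set m := Nat.clog p n with hm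
  have hnm : n ≤ p ^ m := Nat.le_pow_clog hp.one_lt n
  have hsplit_final : SplitsIn (polyIter A n) (d₁ * p ^ m) := by
    intro y hy
    have h1 : (u ^ n) y = 0 := ukill n y hy
    have h2 : (u ^ p ^ m) y = 0 := by
      have : u ^ p ^ m = u ^ (p ^ m - n) * u ^ n := by
        rw [← pow_add]
        congr 1
        omega
      rw [this, Module.End.mul_apply, h1, map_zero]
    have h3 : u ^ p ^ m = ψ ^ p ^ m - 1 := by
      rw [hu]
      have := sub_pow_char_pow_of_commute (R := Module.End ℤ K) p m
        (x := ψ) (y := 1) (Commute.one_right ψ)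
      rw [this, one_pow]
    rw [h3, LinearMap.sub_apply, Module.End.one_apply, sub_eq_zero] at h2
    rw [hψpow] at h2
    show y ^ q ^ (d₁ * p ^ m) = y
    calc y ^ q ^ (d₁ * p ^ m) = y ^ Q ^ p ^ m := by rw [hQ, ← pow_mul]
      _ = y := h2
  have hdvd2 : sDeg A n ∣ d₁ * p ^ m :=
    hdvd_all n (d₁ * p ^ m) (Nat.mul_pos hd1pos (pow_pos hp.pos m)) hsplit_final
  -- conclude
  obtain ⟨c, hc⟩ := hdvd1
  have hcd : c ∣ p ^ m := by
    have : d₁ * c ∣ d₁ * p ^ m := hc ▸ hdvd2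
    exact (mul_dvd_mul_iff_left (by omega : d₁ ≠ 0)).mp this
  obtain ⟨i, him, hci⟩ := (Nat.dvd_prime_pow hp).mp hcd
  refine ⟨i, ?_, by rw [hc, hci]⟩
  have hpm : p ^ m < p * n := by
    rcases eq_or_lt_of_le hn with h | h
    · rw [hm, ← h, Nat.clog_one_right, pow_zero]
      have := hp.one_lt
      omega
    · have hmpos : 0 < m := Nat.clog_pos hp.one_lt (by omega)
      have hlt : p ^ (m - 1) < n := by
        have := Nat.pow_pred_clog_lt_self hp.one_lt (x := n) (by omega)
        simpa [hm, Nat.pred_eq_sub_one] using this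
      calc p ^ m = p * p ^ (m - 1) := by
            rw [← pow_succ']
            congr 1
            omega
        _ < p * n := by
            exact (Nat.mul_lt_mul_left hp.pos).mpr hlt
  exact lt_of_le_of_lt (Nat.pow_le_pow_right hp.pos him) hpm
end

section
/- Let A ∈ F_q[X] be an additive polynomial that is not of the form aX^{p^h} with a ∈ F_q and h ≥ 0, and for b ∈ F_q* set A_b(X) = A(X) + b. Then for every b ∈ F_q* and every integer n ≥ 1, one has s_{A_b}(n) ∈ {s_A(n), p·s_A(n)}. -/
open Polynomial Filter

section Aux
set_option linter.unusedSectionVars false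
variable {F : Type*} [Field F] [Fintype F]

private lemma iterPow {R : Type*} [Monoid R] (Q k : ℕ) (x : R) :
    (fun z : R => z ^ Q)^[k] x = x ^ Q ^ k := by
  induction k with
  | zero => simp
  | succ k ih => rw [Function.iterate_succ_apply', ih, ← pow_mul, ← pow_succ]

private lemma frobQ (p : ℕ) [Fact p.Prime] [CharP F p] (j : ℕ) : ∃ φ : AlgebraicClosure F →+* AlgebraicClosure F,
    (∀ x, φ x = x ^ Fintype.card F ^ j) ∧
    (∀ a : F, φ (algebraMap F (AlgebraicClosure F) a) = algebraMap F (AlgebraicClosure F) a) := by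
  obtain ⟨f, hp, hcard⟩ := FiniteField.card F p
  haveI : ExpChar (AlgebraicClosure F) p := ExpChar.prime hp
  refine ⟨iterateFrobenius (AlgebraicClosure F) p ((f : ℕ) * j), fun x => ?_, fun a => ?_⟩
  · rw [iterateFrobenius_def, pow_mul, hcard]
  · rw [iterateFrobenius_def, pow_mul, ← hcard, ← map_pow, FiniteField.pow_card_pow]

private lemma frob_aeval {φ : AlgebraicClosure F →+* AlgebraicClosure F}
    (hφ : ∀ a : F, φ (algebraMap F (AlgebraicClosure F) a) = algebraMap F (AlgebraicClosure F) a)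
    (P : Polynomial F) (x : AlgebraicClosure F) :
    φ (Polynomial.aeval x P) = Polynomial.aeval (φ x) P := by
  rw [Polynomial.aeval_def, Polynomial.aeval_def, Polynomial.hom_eval₂]
  congr 1
  exact RingHom.ext hφ

private lemma aeval_addhom (p : ℕ) [Fact p.Prime] [CharP F p] {A : Polynomial F}
    (hA : IsAdditivePoly p A) (x y : AlgebraicClosure F) :
    Polynomial.aeval (x + y) A = Polynomial.aeval x A + Polynomial.aeval y A := by
  haveI : CharP (AlgebraicClosure F) p := inferInstance
  rw [Polynomial.aeval_eq_sum_range, Polynomial.aeval_eq_sum_range,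
    Polynomial.aeval_eq_sum_range, ← Finset.sum_add_distrib]
  refine Finset.sum_congr rfl fun i _ => ?_
  rcases eq_or_ne (A.coeff i) 0 with h | h
  · simp [h]
  · obtain ⟨k, rfl⟩ := hA i h
    rw [add_pow_char_pow, smul_add]

private lemma aeval_iter_add (p : ℕ) [Fact p.Prime] [CharP F p] {A : Polynomial F}
    (hA : IsAdditivePoly p A) (n : ℕ) (x y : AlgebraicClosure F) :
    Polynomial.aeval (x + y) (polyIter A n)
      = Polynomial.aeval x (polyIter A n) + Polynomial.aeval y (polyIter A n) := by
  induction n with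
  | zero => simp [polyIter]
  | succ n ih =>
    simp only [polyIter, Function.iterate_succ_apply'] at *
    rw [Polynomial.aeval_comp, Polynomial.aeval_comp, Polynomial.aeval_comp, ih,
      aeval_addhom p hA]

private lemma aeval_iter_sub (p : ℕ) [Fact p.Prime] [CharP F p] {A : Polynomial F}
    (hA : IsAdditivePoly p A) (n : ℕ) (x y : AlgebraicClosure F) :
    Polynomial.aeval (x - y) (polyIter A n)
      = Polynomial.aeval x (polyIter A n) - Polynomial.aeval y (polyIter A n) := by
  have h := aeval_iter_add p hA n (x - y) y
  rw [sub_add_cancel] at h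
  rw [h]; ring

private noncomputable def transC {F : Type*} [Field F] (A : Polynomial F) (b : F) : ℕ → F
  | 0 => 0
  | n+1 => A.eval (transC A b n) + b

private lemma aeval_iter_translate (p : ℕ) [Fact p.Prime] [CharP F p] {A : Polynomial F}
    (hA : IsAdditivePoly p A) (b : F) (n : ℕ) (y : AlgebraicClosure F) :
    Polynomial.aeval y (polyIter (A + Polynomial.C b) n)
      = Polynomial.aeval y (polyIter A n)
        + algebraMap F (AlgebraicClosure F) (transC A b n) := by
  induction n with
  | zero => simp [polyIter, transC]
  | succ n ih =>
    simp only [polyIter, Function.iterate_succ_apply'] at *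
    rw [Polynomial.aeval_comp, Polynomial.aeval_comp, ih, map_add, Polynomial.aeval_C,
      aeval_addhom p hA, Polynomial.aeval_algebraMap_apply_eq_algebraMap_eval,
      transC, map_add]
    ring
private lemma pow_q_mul {R : Type*} [Monoid R] (q : ℕ) (y : R) (m t : ℕ)
    (h : y ^ q ^ m = y) : y ^ q ^ (m * t) = y := by
  induction t with
  | zero => simp
  | succ t ih => rw [mul_add, mul_one, pow_add, pow_mul, ih, h]

private lemma exists_period (p : ℕ) [Fact p.Prime] [CharP F p] (y : AlgebraicClosure F) :
    ∃ m, 0 < m ∧ y ^ Fintype.card F ^ m = y := by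
  obtain ⟨φ, hφ, hφF⟩ := frobQ (F := F) p 1
  set f : AlgebraicClosure F → AlgebraicClosure F := fun z => z ^ Fintype.card F ^ 1 with hf
  have hfφ : f = φ := funext fun x => (hφ x).symm
  have hinj : Function.Injective f := hfφ ▸ φ.injective
  have hy : IsIntegral F y := Algebra.IsIntegral.isIntegral y
  set P := minpoly F y with hP
  have hP0 : P ≠ 0 := minpoly.ne_zero hy
  have hmaps : ∀ z : AlgebraicClosure F, Polynomial.aeval z P = 0 →
      Polynomial.aeval (f z) P = 0 := by
    intro z hz
    rw [hfφ, ← frob_aeval hφF, hz, map_zero]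
  have hmem : ∀ k, Polynomial.aeval (f^[k] y) P = 0 := by
    intro k
    induction k with
    | zero => exact minpoly.aeval F y
    | succ k ih => rw [Function.iterate_succ_apply']; exact hmaps _ ih
  have hfin : Set.Finite {z : AlgebraicClosure F | Polynomial.aeval z P = 0} := by
    have : {z : AlgebraicClosure F | Polynomial.aeval z P = 0}
        = {z | (P.map (algebraMap F (AlgebraicClosure F))).IsRoot z} := by
      ext z
      simp [Polynomial.IsRoot, Polynomial.eval_map, Polynomial.aeval_def]
    rw [this]
    exact Polynomial.finite_setOf_isRoot
      (Polynomial.map_ne_zero_iff (algebraMap F (AlgebraicClosure F)).injective |>.mpr hP0)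
  have hni : ¬ Function.Injective (fun k : ℕ => f^[k] y) := by
    intro hinj'
    exact Set.infinite_range_of_injective hinj'
      (hfin.subset (by rintro _ ⟨k, rfl⟩; exact hmem k))
  rw [Function.not_injective_iff] at hni
  obtain ⟨a, c, hac, hne⟩ := hni
  wlog hlt : a < c generalizing a c
  · exact this c a hac.symm hne.symm (by omega)
  have : f^[a] (f^[c - a] y) = f^[a] y := by
    rw [← Function.iterate_add_apply, Nat.add_sub_cancel' hlt.le, hac]
  have hper : f^[c - a] y = y := Function.Injective.iterate hinj a this
  refine ⟨c - a, by omega, ?_⟩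
  have := iterPow (Fintype.card F ^ 1) (c - a) y
  rw [← hf, hper, ← pow_mul, one_mul] at this
  exact this.symm

private lemma splitsIn_gcd (P : Polynomial F) (j k : ℕ) (hj : SplitsIn P j)
    (hk : SplitsIn P k) : SplitsIn P (Nat.gcd j k) := by
  intro y hy
  set f : AlgebraicClosure F → AlgebraicClosure F := fun z => z ^ Fintype.card F with hf
  have hiter : ∀ m, f^[m] y = y ^ Fintype.card F ^ m := fun m => iterPow _ _ _
  have h1 : Function.IsPeriodicPt f j y := by
    rw [Function.IsPeriodicPt, Function.IsFixedPt, hiter]; exact hj y hy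
  have h2 : Function.IsPeriodicPt f k y := by
    rw [Function.IsPeriodicPt, Function.IsFixedPt, hiter]; exact hk y hy
  have : Function.IsPeriodicPt f (Nat.gcd j k) y :=
    Function.isPeriodicPt_iff_minimalPeriod_dvd.mpr
      (Nat.dvd_gcd h1.minimalPeriod_dvd h2.minimalPeriod_dvd)
  rw [Function.IsPeriodicPt, Function.IsFixedPt, hiter] at this
  exact this

private lemma splitsIn_exists (p : ℕ) [Fact p.Prime] [CharP F p] (P : Polynomial F)
    (hP : P ≠ 0) : ∃ j, 0 < j ∧ SplitsIn P j := by
  classical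
  set T := (P.map (algebraMap F (AlgebraicClosure F))).roots.toFinset with hT
  refine ⟨∏ y ∈ T, (exists_period p y).choose, Finset.prod_pos fun y _ =>
    (exists_period p y).choose_spec.1, ?_⟩
  intro y hy
  have hyT : y ∈ T := by
    rw [hT, Multiset.mem_toFinset, Polynomial.mem_roots
      (Polynomial.map_ne_zero_iff (algebraMap F (AlgebraicClosure F)).injective |>.mpr hP)]
    rwa [Polynomial.IsRoot, Polynomial.eval_map, ← Polynomial.aeval_def]
  obtain ⟨t, ht⟩ := Finset.dvd_prod_of_mem (fun y => (exists_period p y).choose) hyT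
  rw [ht]
  exact pow_q_mul _ y _ t (exists_period p y).choose_spec.2

private lemma sInf_dvd_of_mem (P : Polynomial F) {j : ℕ}
    (hj : j ∈ {j : ℕ | 0 < j ∧ SplitsIn P j}) :
    sInf {j : ℕ | 0 < j ∧ SplitsIn P j} ∣ j := by
  set S := {j : ℕ | 0 < j ∧ SplitsIn P j} with hS
  have hne : S.Nonempty := ⟨j, hj⟩
  have hs := Nat.sInf_mem hne
  have hg : Nat.gcd (sInf S) j ∈ S :=
    ⟨Nat.gcd_pos_of_pos_left _ hs.1, splitsIn_gcd P _ _ hs.2 hj.2⟩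
  have h1 : sInf S ≤ Nat.gcd (sInf S) j := Nat.sInf_le hg
  have h2 : Nat.gcd (sInf S) j ≤ sInf S := Nat.le_of_dvd hs.1 (Nat.gcd_dvd_left _ _)
  have : Nat.gcd (sInf S) j = sInf S := le_antisymm h2 h1
  rw [← this]
  exact Nat.gcd_dvd_right _ _
end Aux

theorem sDeg_affine_translate (p : ℕ) [Fact p.Prime] (F : Type*) [Field F] [Fintype F]
    [CharP F p] (A : Polynomial F) (hA : IsAdditivePoly p A)
    (hexc : ¬ ∃ (a : F) (h : ℕ), A = Polynomial.C a * Polynomial.X ^ p ^ h) :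
    ∀ b : F, b ≠ 0 → ∀ n : ℕ, 1 ≤ n →
      sDeg (A + Polynomial.C b) n = sDeg A n ∨
        sDeg (A + Polynomial.C b) n = p * sDeg A n := by
  intro b hb n hn
  classical
  -- basic degree facts
  have hA0 : A ≠ 0 := by
    intro h; exact hexc ⟨0, 0, by simp [h]⟩
  have hc0 : A.coeff 0 = 0 := by
    by_contra hc
    obtain ⟨k, hk⟩ := hA 0 hc
    exact pow_ne_zero k (Fact.out : p.Prime).ne_zero hk.symm
  have hdA : A.natDegree ≠ 0 := by
    intro h
    apply hA0
    rw [Polynomial.eq_C_of_natDegree_eq_zero h, hc0, map_zero]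
  have hdAb : (A + Polynomial.C b).natDegree = A.natDegree := Polynomial.natDegree_add_C
  have hiterdeg : ∀ (Q : Polynomial F) (m : ℕ), (polyIter Q m).natDegree = Q.natDegree ^ m := by
    intro Q m
    induction m with
    | zero => simp [polyIter]
    | succ m ih =>
      simp only [polyIter, Function.iterate_succ_apply'] at *
      rw [Polynomial.natDegree_comp, ih, pow_succ, mul_comm]
  set P := polyIter A n with hPdef
  set Pb := polyIter (A + Polynomial.C b) n with hPbdef
  have hPdeg : P.natDegree ≠ 0 := by
    rw [hPdef, hiterdeg]; exact pow_ne_zero n hdA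
  have hPbdeg : Pb.natDegree ≠ 0 := by
    rw [hPbdef, hiterdeg, hdAb]; exact pow_ne_zero n hdA
  have hP0 : P ≠ 0 := fun h => hPdeg (by rw [h]; simp)
  have hPb0 : Pb ≠ 0 := fun h => hPbdeg (by rw [h]; simp)
  -- a root of Pb in the algebraic closure
  obtain ⟨x0, hx0⟩ := IsAlgClosed.exists_root
      (Pb.map (algebraMap F (AlgebraicClosure F))) (by
    rw [Polynomial.degree_map]
    intro h
    exact hPbdeg (Polynomial.natDegree_eq_zero_iff_degree_le_zero.mpr h.le))
  have hx0' : Polynomial.aeval x0 Pb = 0 := by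
    rwa [Polynomial.aeval_def, ← Polynomial.eval_map]
  -- the splitting sets
  set SP := {j : ℕ | 0 < j ∧ SplitsIn P j} with hSP
  set SPb := {j : ℕ | 0 < j ∧ SplitsIn Pb j} with hSPb
  have hsdegA : sDeg A n = sInf SP := rfl
  have hsdegAb : sDeg (A + Polynomial.C b) n = sInf SPb := rfl
  obtain ⟨j0, hj0⟩ := splitsIn_exists p P hP0
  have hSPne : SP.Nonempty := ⟨j0, hj0⟩
  have hs := Nat.sInf_mem hSPne
  set s := sInf SP with hsdef
  -- translation constant
  set c := transC A b n with hc
  have htrans : ∀ y, Polynomial.aeval y Pb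
      = Polynomial.aeval y P + algebraMap F (AlgebraicClosure F) c :=
    fun y => aeval_iter_translate p hA b n y
  have hx0P : Polynomial.aeval x0 P = - algebraMap F (AlgebraicClosure F) c := by
    have h1 := htrans x0
    rw [hx0'] at h1
    exact eq_neg_of_add_eq_zero_left h1.symm
  have hdiffroot : ∀ y : AlgebraicClosure F, Polynomial.aeval y Pb = 0 →
      Polynomial.aeval (y - x0) P = 0 := by
    intro y hy
    have h1 := htrans y
    rw [hy] at h1
    have hyP : Polynomial.aeval y P = - algebraMap F (AlgebraicClosure F) c :=
      eq_neg_of_add_eq_zero_left h1.symm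
    rw [hPdef, aeval_iter_sub p hA, ← hPdef, hyP, hx0P, sub_self]
  have haddroot : ∀ w, Polynomial.aeval w P = 0 → Polynomial.aeval (x0 + w) Pb = 0 := by
    intro w hw
    rw [htrans, hPdef, aeval_iter_add p hA, ← hPdef, hw, add_zero, hx0P, neg_add_cancel]
  have hsub : SPb ⊆ SP := by
    rintro j ⟨hj0', hjs⟩
    refine ⟨hj0', fun w hw => ?_⟩
    obtain ⟨φ, hφ, hφF⟩ := frobQ (F := F) p j
    have h1 : φ (x0 + w) = x0 + w := by rw [hφ]; exact hjs _ (haddroot w hw)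
    have h2 : φ x0 = x0 := by rw [hφ]; exact hjs _ hx0'
    rw [map_add, h2] at h1
    have h3 : φ w = w := add_left_cancel h1
    rwa [hφ] at h3
  -- the element v
  obtain ⟨φ, hφ, hφF⟩ := frobQ (F := F) p s
  set v := φ x0 - x0 with hv
  have hvroot : Polynomial.aeval v P = 0 := by
    rw [hv, hPdef, aeval_iter_sub p hA, ← hPdef, ← frob_aeval hφF, hx0P, map_neg, hφF,
      sub_self]
  have hvfix : φ v = v := by rw [hφ]; exact hs.2 v hvroot
  by_cases hv0 : v = 0
  · -- v = 0 : same splitting field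
    have hx0fix : φ x0 = x0 := by rwa [hv, sub_eq_zero] at hv0
    have hsSPb : s ∈ SPb := by
      refine ⟨hs.1, fun y hy => ?_⟩
      have hw := hdiffroot y hy
      have hwfix : φ (y - x0) = y - x0 := by rw [hφ]; exact hs.2 _ hw
      rw [map_sub, hx0fix] at hwfix
      have h3 : φ y = y := sub_left_inj.mp hwfix
      rwa [hφ] at h3
    left
    rw [hsdegAb, hsdegA]
    exact le_antisymm (Nat.sInf_le hsSPb) (Nat.sInf_le (hsub (Nat.sInf_mem ⟨s, hsSPb⟩)))
  · -- v ≠ 0 : degree multiplied by (at most) p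
    have hτ : φ x0 = x0 + v := by rw [hv]; ring
    have hiterx0 : ∀ k : ℕ,
        (fun z : AlgebraicClosure F => z ^ Fintype.card F ^ s)^[k] x0 = x0 + k • v := by
      intro k
      induction k with
      | zero => simp
      | succ k ih =>
        rw [Function.iterate_succ_apply', ih]
        rw [← hφ, map_add, hτ, map_nsmul, hvfix, succ_nsmul]
        ring
    have hx0p : x0 ^ Fintype.card F ^ (s * p) = x0 := by
      have h1 := hiterx0 p
      rw [iterPow, ← pow_mul] at h1
      have hpv : p • v = 0 := by
        have hcast : (p : AlgebraicClosure F) = 0 := CharP.cast_eq_zero _ p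
        rw [nsmul_eq_mul, hcast, zero_mul]
      rw [hpv, add_zero] at h1
      exact h1
    have hpsSPb : p * s ∈ SPb := by
      refine ⟨Nat.mul_pos (Fact.out : p.Prime).pos hs.1, fun y hy => ?_⟩
      obtain ⟨ψ, hψ, hψF⟩ := frobQ (F := F) p (p * s)
      have hw := hdiffroot y hy
      have hwfix : (y - x0) ^ Fintype.card F ^ (p * s) = y - x0 := by
        rw [mul_comm p s]
        exact pow_q_mul _ _ s p (hs.2 _ hw)
      have hx0fix : x0 ^ Fintype.card F ^ (p * s) = x0 := by rw [mul_comm p s]; exact hx0p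
      have e1 : ψ (y - x0) = y - x0 := by rw [hψ]; exact hwfix
      have e2 : ψ x0 = x0 := by rw [hψ]; exact hx0fix
      rw [map_sub, e2] at e1
      have h3 : ψ y = y := sub_left_inj.mp e1
      rwa [hψ] at h3
    have hsb := Nat.sInf_mem (⟨p * s, hpsSPb⟩ : SPb.Nonempty)
    have h1 : s ∣ sInf SPb := sInf_dvd_of_mem P (hsub hsb)
    have h2 : sInf SPb ∣ p * s := sInf_dvd_of_mem Pb hpsSPb
    obtain ⟨k, hk⟩ := h1
    have hkdvd : k ∣ p := by
      rw [hk, mul_comm p s] at h2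
      exact (mul_dvd_mul_iff_left hs.1.ne').mp h2
    rcases (Fact.out : p.Prime).eq_one_or_self_of_dvd k hkdvd with h | h
    · left; rw [hsdegAb, hsdegA, hk, h, mul_one]
    · right; rw [hsdegAb, hsdegA, hk, h, mul_comm]
end

section
/- Let A ∈ F_q[X] be an additive polynomial that is not of the form aX^{p^h} with a ∈ F_q and h ≥ 0, set M = s_A(1), and let s_0 = max{j > 0 : s_A(j) = M}. Suppose A_*(X) = R(X)^q with R ∈ F_q[X] additive and r ≥ 1 is an integer such that A_*(A^{(s_0)}(X)) = X^{q^{M+r}} − X^{q^r}, and suppose the F_p-linear map z ↦ A_*(z) of F_{q^M} is not nilpotent. Then for every integer n > s_0, one has s_A(n) = M·p^{⌈log_p(n/s_0)⌉}; equivalently, s_A(n) = M·p^i where i is the least nonnegative integer with s_0·p^i ≥ n. -/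
open Polynomial Filter

/-- The `F_p`-linear map `z ↦ B(z)` on `F_{q^M}` (realized inside an algebraic
closure of `F` as the subfield of elements fixed by the `M`-th power of the
`q`-Frobenius) is nilpotent: some iterate of it is the zero map. -/
def IsNilpotentOn {F : Type*} [Field F] [Fintype F] (B : Polynomial F) (M : ℕ) : Prop :=
  ∃ n : ℕ, 0 < n ∧ ∀ y : AlgebraicClosure F,
    y ^ Fintype.card F ^ M = y → (fun z => Polynomial.aeval z B)^[n] y = 0

/-! ### Auxiliary lemmas -/

section AuxGeneric

lemma aux_charP_end {p : ℕ} {K : Type*} [CommRing K] [CharP K p] :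
    CharP (AddMonoid.End K) p := by
  constructor
  intro n
  constructor
  · intro h
    have h1 : ((n : AddMonoid.End K)) (1 : K) = 0 := by rw [h]; rfl
    rw [AddMonoid.End.natCast_apply, nsmul_eq_mul, mul_one] at h1
    exact (CharP.cast_eq_zero_iff K p n).1 h1
  · intro h
    apply AddMonoidHom.ext
    intro x
    change (n : AddMonoid.End K) x = (0 : AddMonoid.End K) x
    rw [AddMonoid.End.natCast_apply, nsmul_eq_mul, (CharP.cast_eq_zero_iff K p n).2 h, zero_mul]
    rfl

lemma aux_psi_iterate {p : ℕ} [Fact p.Prime] {K : Type*} [CommRing K] [CharP K p]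
    (s k : ℕ) (x : K) :
    (fun y : K => y ^ p ^ s - y)^[p ^ k] x = x ^ (p ^ s) ^ p ^ k - x := by
  haveI := aux_charP_end (p := p) (K := K)
  set f : AddMonoid.End K := AddMonoidHom.mk' (fun y => y ^ p ^ s)
    (fun a b => add_pow_char_pow (p := p) (n := s) (x := a) (y := b)) with hf
  have hfe : (fun y : K => y ^ p ^ s - y) = ⇑(f - 1) := by
    funext y
    show _ = f y - (1 : AddMonoid.End K) y
    rfl
  have hiter : ∀ (m : ℕ) (y : K), (⇑f)^[m] y = y ^ (p ^ s) ^ m := by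
    intro m
    induction m with
    | zero => intro y; simp
    | succ m ih =>
      intro y
      rw [Function.iterate_succ_apply, ih, hf]
      show ((y ^ p ^ s) ^ (p ^ s) ^ m) = _
      rw [← pow_mul, ← pow_succ']
  have hkey : (f - 1) ^ p ^ k = f ^ p ^ k - 1 := by
    simpa using sub_pow_char_pow_of_commute (R := AddMonoid.End K) (p := p) (n := k)
      (x := f) (y := 1) (Commute.one_right f)
  calc (fun y : K => y ^ p ^ s - y)^[p ^ k] x = ((f - 1) ^ p ^ k) x := by
        rw [hfe, AddMonoid.End.coe_pow]
    _ = (f ^ p ^ k) x - x := by rw [hkey]; rfl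
    _ = x ^ (p ^ s) ^ p ^ k - x := by
        have : (f ^ p ^ k) x = (⇑f)^[p ^ k] x := by rw [AddMonoid.End.coe_pow]
        rw [this, hiter]

lemma aux_pow_mul_fix {K : Type*} [CommMonoid K] (q d : ℕ) (x : K) (h : x ^ q ^ d = x) :
    ∀ m : ℕ, x ^ q ^ (d * m) = x := by
  intro m
  induction m with
  | zero => simp
  | succ m ih =>
    rw [Nat.mul_succ, pow_add, pow_mul, ih, h]

lemma aux_pow_gcd_fix {K : Type*} [CommMonoid K] (q : ℕ) (x : K) :
    ∀ j l : ℕ, x ^ q ^ j = x → x ^ q ^ l = x → x ^ q ^ Nat.gcd j l = x := by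
  intro j l
  induction j, l using Nat.gcd.induction with
  | H0 l => intro _ h; simpa using h
  | H1 j l hj ih =>
    intro h1 h2
    rw [Nat.gcd_rec]
    apply ih _ h1
    have hd : l = j * (l / j) + l % j := (Nat.div_add_mod l j).symm ▸ by omega
    calc x ^ q ^ (l % j) = (x ^ q ^ (j * (l / j))) ^ q ^ (l % j) := by
          rw [aux_pow_mul_fix q j x h1]
      _ = x ^ q ^ l := by rw [← pow_mul, ← pow_add, ← hd]
      _ = x := h2

end AuxGeneric

section AuxField
open IntermediateField
variable {F : Type*} [Field F] [Fintype F]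

lemma aux_elem_fixed (y : AlgebraicClosure F) :
    ∃ d : ℕ, 0 < d ∧ y ^ (Fintype.card F) ^ d = y := by
  have hint : IsIntegral F y := (Algebra.IsAlgebraic.isAlgebraic y).isIntegral
  haveI : FiniteDimensional F F⟮y⟯ := IntermediateField.adjoin.finiteDimensional hint
  haveI : Fintype F⟮y⟯ := Module.fintypeOfFintype (Module.finBasis F F⟮y⟯)
  refine ⟨Module.finrank F F⟮y⟯, Module.finrank_pos, ?_⟩
  have hy : (IntermediateField.AdjoinSimple.gen F y : AlgebraicClosure F) = y :=
    IntermediateField.AdjoinSimple.algebraMap_gen F y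
  have hcard : Fintype.card F⟮y⟯ = (Fintype.card F) ^ Module.finrank F F⟮y⟯ :=
    Module.card_eq_pow_finrank
  have hfix := FiniteField.pow_card (IntermediateField.AdjoinSimple.gen F y)
  rw [hcard] at hfix
  calc y ^ (Fintype.card F) ^ Module.finrank F F⟮y⟯
      = ((IntermediateField.AdjoinSimple.gen F y ^
          (Fintype.card F) ^ Module.finrank F F⟮y⟯ : F⟮y⟯) : AlgebraicClosure F) := by
        push_cast [hy]; ring
    _ = y := by rw [hfix, hy]

lemma aux_splits_nonempty {P : Polynomial F} (hP : P ≠ 0) :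
    ∃ j : ℕ, 0 < j ∧
      ∀ y : AlgebraicClosure F, aeval y P = 0 → y ^ (Fintype.card F) ^ j = y := by
  classical
  have hPm : P.map (algebraMap F (AlgebraicClosure F)) ≠ 0 :=
    (Polynomial.map_ne_zero_iff (algebraMap F (AlgebraicClosure F)).injective).2 hP
  set S : Finset (AlgebraicClosure F) :=
    (P.map (algebraMap F (AlgebraicClosure F))).roots.toFinset with hS
  choose d hd hfix using fun y : AlgebraicClosure F => aux_elem_fixed y
  refine ⟨∏ y ∈ S, d y, Finset.prod_pos fun y _ => hd y, ?_⟩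
  intro y hy
  have hyS : y ∈ S := by
    rw [hS, Multiset.mem_toFinset, mem_roots hPm]
    rw [IsRoot.def, eval_map, ← aeval_def]
    exact hy
  obtain ⟨m, hm⟩ := Finset.dvd_prod_of_mem d hyS
  rw [hm]
  exact aux_pow_mul_fix (Fintype.card F) (d y) y (hfix y) m

end AuxField

section AuxEval
variable {p : ℕ} [Fact p.Prime] {F : Type*} [Field F] [Fintype F] [CharP F p]

lemma aux_aeval_add {A : Polynomial F} (hA : IsAdditivePoly p A)
    (x y : AlgebraicClosure F) : aeval (x + y) A = aeval x A + aeval y A := by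
  haveI : CharP (AlgebraicClosure F) p :=
    charP_of_injective_algebraMap (algebraMap F (AlgebraicClosure F)).injective p
  rw [aeval_def, aeval_def, aeval_def, eval₂_eq_sum, eval₂_eq_sum, eval₂_eq_sum,
    Polynomial.sum_def, Polynomial.sum_def, Polynomial.sum_def, ← Finset.sum_add_distrib]
  apply Finset.sum_congr rfl
  intro i hi
  obtain ⟨h, rfl⟩ := hA i (Polynomial.mem_support_iff.1 hi)
  rw [add_pow_char_pow, mul_add]

lemma aux_aeval_zero {A : Polynomial F} (hA : IsAdditivePoly p A) :
    aeval (0 : AlgebraicClosure F) A = 0 := by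
  have h0 : A.coeff 0 = 0 := by
    by_contra h
    obtain ⟨h', hh⟩ := hA 0 h
    have := pow_pos (Nat.Prime.pos (Fact.out : Nat.Prime p)) h'
    omega
  rw [aeval_def, eval₂_at_zero, h0, map_zero]

include p in
lemma aux_aeval_frob (A : Polynomial F) (t : ℕ) (x : AlgebraicClosure F) :
    aeval (x ^ (Fintype.card F) ^ t) A = (aeval x A) ^ (Fintype.card F) ^ t := by
  haveI : CharP (AlgebraicClosure F) p :=
    charP_of_injective_algebraMap (algebraMap F (AlgebraicClosure F)).injective p
  obtain ⟨e, -, he⟩ := FiniteField.card F p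
  set K := AlgebraicClosure F
  have hq : (Fintype.card F) ^ t = p ^ ((e : ℕ) * t) := by rw [he, ← pow_mul]
  set φ := iterateFrobenius K p ((e : ℕ) * t) with hφ
  have hφx : ∀ z : K, φ z = z ^ (Fintype.card F) ^ t := by
    intro z; rw [hφ, iterateFrobenius_def, hq]
  rw [← hφx, ← hφx, aeval_def, aeval_def, eval₂_eq_sum, eval₂_eq_sum,
    Polynomial.sum_def, Polynomial.sum_def, map_sum]
  apply Finset.sum_congr rfl
  intro i _
  rw [map_mul, map_pow, hφx]
  congr 1
  rw [hφx, ← map_pow (algebraMap F K), FiniteField.pow_card_pow]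

lemma aux_aeval_surj {A : Polynomial F} (hdeg : 1 ≤ A.natDegree) :
    Function.Surjective (fun x : AlgebraicClosure F => aeval x A) := by
  intro c
  have h1 : (A.map (algebraMap F (AlgebraicClosure F))).natDegree = A.natDegree :=
    natDegree_map _
  have h2 : (A.map (algebraMap F (AlgebraicClosure F)) - C c).natDegree = A.natDegree := by
    rw [natDegree_sub_C, h1]
  have hne : (A.map (algebraMap F (AlgebraicClosure F)) - C c) ≠ 0 := by
    intro h0
    rw [h0] at h2
    simp at h2
    omega
  have hdeg' : (A.map (algebraMap F (AlgebraicClosure F)) - C c).degree ≠ 0 := by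
    rw [degree_eq_natDegree hne, h2]
    exact_mod_cast (by omega : (A.natDegree : ℤ) ≠ 0)
  obtain ⟨x, hx⟩ := IsAlgClosed.exists_root _ hdeg'
  refine ⟨x, ?_⟩
  rw [IsRoot.def, eval_sub, eval_C, sub_eq_zero, eval_map, ← aeval_def] at hx
  exact (show (aeval x) A = c from hx)

lemma aux_aeval_iter (P : Polynomial F) (n : ℕ) (x : AlgebraicClosure F) :
    aeval x (polyIter P n) = (fun y => aeval y P)^[n] x := by
  induction n generalizing x with
  | zero => simp [polyIter]
  | succ n ih =>
    rw [show polyIter P (n + 1) = P.comp (polyIter P n) from Function.iterate_succ_apply' _ _ _,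
      Function.iterate_succ_apply', aeval_comp, ih]

end AuxEval

theorem sDeg_closed_formula (p : ℕ) [Fact p.Prime] (F : Type*) [Field F]
    [Fintype F] [CharP F p] (A : Polynomial F) (hA : IsAdditivePoly p A)
    (hexc : ¬ ∃ (a : F) (h : ℕ), A = Polynomial.C a * Polynomial.X ^ p ^ h)
    (s₀ : ℕ) (hs₀pos : 0 < s₀) (hs₀ : sDeg A s₀ = sDeg A 1)
    (hs₀max : ∀ j : ℕ, 0 < j → sDeg A j = sDeg A 1 → j ≤ s₀)
    (R : Polynomial F) (hR : IsAdditivePoly p R) (r : ℕ) (hr : 1 ≤ r)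
    (heq : (R ^ Fintype.card F).comp (polyIter A s₀) =
      Polynomial.X ^ Fintype.card F ^ (sDeg A 1 + r) -
        Polynomial.X ^ Fintype.card F ^ r)
    (hnil : ¬ IsNilpotentOn (R ^ Fintype.card F) (sDeg A 1)) :
    ∀ n : ℕ, s₀ < n →
      sDeg A n = sDeg A 1 * p ^ sInf {i : ℕ | n ≤ s₀ * p ^ i} := by
  classical
  intro n hn
  have hp : Nat.Prime p := Fact.out
  have hp1 : 1 < p := hp.one_lt
  set K := AlgebraicClosure F with hK
  haveI : CharP K p :=
    charP_of_injective_algebraMap (algebraMap F K).injective p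
  obtain ⟨e, -, hqe⟩ := FiniteField.card F p
  set q : ℕ := Fintype.card F with hq
  have hq1 : 1 < q := Fintype.one_lt_card
  have hq0 : 0 < q := by omega
  set M : ℕ := sDeg A 1 with hM
  set a : K → K := fun x => aeval x A with ha
  set b : K → K := fun x => aeval x (R ^ q) with hb
  -- basic algebra facts
  have hqpow : ∀ t : ℕ, q ^ t = p ^ ((e : ℕ) * t) := by
    intro t; rw [hqe, ← pow_mul]
  have ha_add : ∀ x y : K, a (x + y) = a x + a y := fun x y => aux_aeval_add hA x y
  have ha_zero : a 0 = 0 := aux_aeval_zero hA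
  have ha_sub : ∀ x y : K, a (x - y) = a x - a y := by
    intro x y
    have hneg : a (-y) = - a y := by
      have h1 : a y + a (-y) = 0 := by rw [← ha_add]; simp [ha_zero]
      linear_combination h1
    rw [sub_eq_add_neg, ha_add, hneg, sub_eq_add_neg]
  have ha_frob : ∀ (t : ℕ) (x : K), a (x ^ q ^ t) = (a x) ^ q ^ t := by
    intro t x
    exact aux_aeval_frob (p := p) A t x
  have hb_eval : ∀ x : K, b x = (aeval x R) ^ q := by
    intro x; rw [hb]; simp [map_pow]
  have hb_add : ∀ x y : K, b (x + y) = b x + b y := by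
    intro x y
    rw [hb_eval, hb_eval, hb_eval, aux_aeval_add hR]
    have : q = p ^ ((e : ℕ) * 1) := by simpa using hqpow 1
    rw [this, add_pow_char_pow]
  have hb_zero : b 0 = 0 := by
    rw [hb_eval, aux_aeval_zero hR, zero_pow (by omega : q ≠ 0)]
  have hb_frob : ∀ (t : ℕ) (x : K), b (x ^ q ^ t) = (b x) ^ q ^ t := by
    intro t x
    rw [hb]
    exact aux_aeval_frob (p := p) (R ^ q) t x
  have hb_sub : ∀ x y : K, b (x - y) = b x - b y := by
    intro x y
    have hneg : b (-y) = - b y := by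
      have h1 : b y + b (-y) = 0 := by rw [← hb_add]; simp [hb_zero]
      linear_combination h1
    rw [sub_eq_add_neg, hb_add, hneg, sub_eq_add_neg]
  -- nonzero / degree facts about A
  have hAne : A ≠ 0 := by
    intro h0
    exact hexc ⟨0, 0, by simp [h0]⟩
  have hAdeg : 1 ≤ A.natDegree := by
    by_contra h
    have hd0 : A.natDegree = 0 := by omega
    have hc : A = C (A.coeff 0) := Polynomial.eq_C_of_natDegree_eq_zero hd0
    have hc0 : A.coeff 0 ≠ 0 := by
      intro h0
      apply hAne
      rw [hc, h0, map_zero]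
    obtain ⟨h', hh⟩ := hA 0 hc0
    have := pow_pos hp.pos h'
    omega
  have hIterNatDeg : ∀ m : ℕ, (polyIter A m).natDegree = A.natDegree ^ m := by
    intro m
    induction m with
    | zero => simp [polyIter]
    | succ m ih =>
      rw [show polyIter A (m + 1) = A.comp (polyIter A m) from
        Function.iterate_succ_apply' _ _ _, natDegree_comp, ih, pow_succ']
  have hIterNe : ∀ m : ℕ, polyIter A m ≠ 0 := by
    intro m h0
    have h1 := hIterNatDeg m
    rw [h0] at h1
    simp at h1
    have := Nat.one_le_pow m A.natDegree (by omega)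
    omega
  -- evaluation of iterates
  have ha_iter_eval : ∀ (m : ℕ) (x : K), aeval x (polyIter A m) = a^[m] x := by
    intro m x
    exact aux_aeval_iter A m x
  -- the splitting sets are nonempty and sDeg membership
  have hSne : ∀ m : ℕ, {j : ℕ | 0 < j ∧ SplitsIn (polyIter A m) j}.Nonempty := by
    intro m
    obtain ⟨j, hj0, hjfix⟩ := aux_splits_nonempty (hIterNe m)
    exact ⟨j, hj0, fun y hy => hjfix y hy⟩
  have hM_mem : 0 < M ∧ SplitsIn (polyIter A 1) M := Nat.sInf_mem (hSne 1)
  have hM0 : 0 < M := hM_mem.1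
  have hW1 : ∀ x : K, a x = 0 → x ^ q ^ M = x := by
    intro x hx
    refine hM_mem.2 x ?_
    rw [ha_iter_eval]
    simpa using hx
  -- the key evaluation identity from heq
  have heval : ∀ x : K, b (a^[s₀] x) = x ^ q ^ (M + r) - x ^ q ^ r := by
    intro x
    have h1 := congrArg (aeval x) heq
    rw [aeval_comp, ha_iter_eval] at h1
    simp only [map_sub, map_pow, aeval_X] at h1
    rw [← hb_eval] at h1
    exact h1
  have hpsi : ∀ x : K, b (a^[s₀] x) = (x ^ q ^ M - x) ^ q ^ r := by
    intro x
    rw [heval]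
    have hsub : (x ^ q ^ M - x) ^ q ^ r = (x ^ q ^ M) ^ q ^ r - x ^ q ^ r := by
      rw [hqpow r]
      exact sub_pow_char_pow _ _ _
    rw [hsub, ← pow_mul, ← pow_add]
  -- commutation of a and b
  have hsurj : Function.Surjective a := aux_aeval_surj hAdeg
  have hsurj_iter : ∀ m : ℕ, Function.Surjective a^[m] := fun m => hsurj.iterate m
  have hca : ∀ x : K, b (a^[s₀] (a x)) = a (b (a^[s₀] x)) := by
    intro x
    rw [hpsi, hpsi, ha_frob, ha_sub, ha_frob]
  have hab : ∀ x : K, a (b x) = b (a x) := by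
    intro x
    obtain ⟨y, rfl⟩ := hsurj_iter s₀ x
    rw [← hca]
    congr 1
    rw [← Function.iterate_succ_apply' a s₀ y, Function.iterate_succ_apply a s₀ y]
  have hab_iter : ∀ (m : ℕ) (x : K), a (b^[m] x) = b^[m] (a x) := by
    intro m
    induction m with
    | zero => intro x; simp
    | succ m ih =>
      intro x
      rw [Function.iterate_succ_apply, Function.iterate_succ_apply, ← hab, ih]
  have hab_iter' : ∀ (m : ℕ) (x : K), a^[m] (b x) = b (a^[m] x) := by
    intro m
    induction m with
    | zero => intro x; simp
    | succ m ih =>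
      intro x
      rw [Function.iterate_succ_apply', Function.iterate_succ_apply', ih, hab]
  -- c := b ∘ a^[s₀] and its iterates
  set c : K → K := fun x => b (a^[s₀] x) with hc
  have hca' : ∀ x : K, c (a x) = a (c x) := fun x => hca x
  have hca_iter : ∀ (m : ℕ) (x : K), c (a^[m] x) = a^[m] (c x) := by
    intro m
    induction m with
    | zero => intro x; simp
    | succ m ih =>
      intro x
      rw [Function.iterate_succ_apply', Function.iterate_succ_apply', hca', ih]
  have hc_iter : ∀ (m : ℕ) (x : K), c^[m] x = b^[m] (a^[s₀ * m] x) := by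
    intro m
    induction m with
    | zero => intro x; simp
    | succ m ih =>
      intro x
      rw [Function.iterate_succ_apply, ih, ← hca_iter, hc]
      show b^[m] (b (a^[s₀] (a^[s₀ * m] x))) = b^[m + 1] (a^[s₀ * (m + 1)] x)
      rw [← Function.iterate_succ_apply b m, ← Function.iterate_add_apply a s₀ (s₀ * m) x,
        show s₀ + s₀ * m = s₀ * (m + 1) from by ring]
  have hpsifrob : ∀ (t : ℕ) (y : K), (y ^ q ^ t) ^ q ^ M - y ^ q ^ t
      = (y ^ q ^ M - y) ^ q ^ t := by
    intro t y
    have hsub : (y ^ q ^ M - y) ^ q ^ t = (y ^ q ^ M) ^ q ^ t - y ^ q ^ t := by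
      rw [hqpow t]
      exact sub_pow_char_pow _ _ _
    rw [hsub, ← pow_mul, ← pow_mul, Nat.mul_comm]
  have hpsifrob_iter : ∀ (m t : ℕ) (y : K),
      (fun z : K => z ^ q ^ M - z)^[m] (y ^ q ^ t)
        = ((fun z : K => z ^ q ^ M - z)^[m] y) ^ q ^ t := by
    intro m
    induction m with
    | zero => intro t y; simp
    | succ m ih =>
      intro t y
      rw [Function.iterate_succ_apply, Function.iterate_succ_apply]
      show (fun z : K => z ^ q ^ M - z)^[m] ((y ^ q ^ t) ^ q ^ M - y ^ q ^ t) = _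
      rw [hpsifrob t y]
      exact ih t (y ^ q ^ M - y)
  have hpsi_c_iter : ∀ (m : ℕ) (x : K),
      c^[m] x = ((fun z : K => z ^ q ^ M - z)^[m] x) ^ q ^ (r * m) := by
    intro m
    induction m with
    | zero => intro x; simp
    | succ m ih =>
      intro x
      rw [Function.iterate_succ_apply, ih]
      rw [show c x = ((fun z : K => z ^ q ^ M - z) x) ^ q ^ r from hpsi x]
      rw [hpsifrob_iter m r]
      rw [← Function.iterate_succ_apply, ← pow_mul, ← pow_add]
      congr 2
      ring
  have hKEY : ∀ (k : ℕ) (x : K),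
      b^[p ^ k] (a^[s₀ * p ^ k] x) = (x ^ q ^ (M * p ^ k) - x) ^ q ^ (r * p ^ k) := by
    intro k x
    rw [← hc_iter, hpsi_c_iter]
    congr 2
    have hfun : (fun z : K => z ^ q ^ M - z) = (fun z : K => z ^ p ^ ((e : ℕ) * M) - z) := by
      funext z; rw [hqpow M]
    have hexp : (p ^ ((e : ℕ) * M)) ^ p ^ k = q ^ (M * p ^ k) := by
      rw [← pow_mul, hqpow (M * p ^ k), Nat.mul_assoc]
    rw [hfun, aux_psi_iterate ((e : ℕ) * M) k x, hexp]
  have hb0iter : ∀ m : ℕ, b^[m] 0 = 0 := fun m => Function.iterate_fixed hb_zero m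
  have hupper : ∀ (k : ℕ) (x : K), a^[s₀ * p ^ k] x = 0 → x ^ q ^ (M * p ^ k) = x := by
    intro k x hx
    have h1 := hKEY k x
    rw [hx, hb0iter] at h1
    have h2 : (x ^ q ^ (M * p ^ k) - x) = 0 := by
      have h3 : (x ^ q ^ (M * p ^ k) - x) ^ q ^ (r * p ^ k) = 0 := h1.symm
      exact (pow_eq_zero_iff (by positivity : q ^ (r * p ^ k) ≠ 0)).1 h3
    rw [sub_eq_zero] at h2
    exact h2
  have hmono : ∀ (m m' : ℕ) (x : K), m ≤ m' → a^[m] x = 0 → a^[m'] x = 0 := by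
    intro m m' x hmm hx
    have : a^[m' - m + m] x = a^[m' - m] (a^[m] x) := Function.iterate_add_apply a _ _ x
    rw [show m' - m + m = m' from by omega] at this
    rw [this, hx]
    exact Function.iterate_fixed ha_zero _
  -- the core non-nilpotency argument
  have hcore : ∀ m : ℕ, 0 < m → (∀ w : K, a w = 0 → b^[m] w = 0) → False := by
    intro m hm hkill
    have st1 : ∀ (j : ℕ) (w : K), a^[j] w = 0 → b^[m * j] w = 0 := by
      intro j
      induction j with
      | zero => intro w hw; simpa using hw
      | succ j ih =>
        intro w hw
        rw [Function.iterate_succ_apply] at hw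
        have h1 : b^[m * j] (a w) = 0 := ih (a w) hw
        have h2 : a (b^[m * j] w) = 0 := by rw [hab_iter]; exact h1
        have h3 : b^[m] (b^[m * j] w) = 0 := hkill _ h2
        rw [← Function.iterate_add_apply] at h3
        rw [show m * (j + 1) = m + m * j from by ring]
        exact h3
    apply hnil
    refine ⟨m * s₀ + 1, by omega, ?_⟩
    intro y hy
    have hy' : y ^ q ^ M = y := hy
    have h1 : a^[s₀] (b y) = 0 := by
      rw [hab_iter', hpsi, hy', sub_self, zero_pow (pow_ne_zero _ (by omega : q ≠ 0))]
    have h2 : b^[m * s₀] (b y) = 0 := st1 s₀ (b y) h1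
    rw [← Function.iterate_succ_apply] at h2
    exact h2
  have hE : ∀ k : ℕ, ∃ w : K, a w = 0 ∧ b^[p ^ k] w ≠ 0 := by
    intro k
    by_contra h
    push_neg at h
    exact hcore (p ^ k) (pow_pos hp.pos k) fun w hw => h w hw
  have hC2 : ∀ k : ℕ, s₀ * p ^ k < n → ¬(∀ x : K, a^[n] x = 0 → x ^ q ^ (M * p ^ k) = x) := by
    intro k hk hall
    obtain ⟨w, hw0, hwb⟩ := hE k
    obtain ⟨x, hx⟩ := hsurj_iter (s₀ * p ^ k) w
    have hxn : a^[n] x = 0 := by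
      apply hmono (s₀ * p ^ k + 1) n x (by omega)
      rw [Function.iterate_succ_apply', hx, hw0]
    have hfix := hall x hxn
    apply hwb
    rw [← hx, hKEY k x, sub_eq_zero.2 hfix, zero_pow (pow_ne_zero _ (by omega : q ≠ 0))]
  -- the index i
  have hine : {i : ℕ | n ≤ s₀ * p ^ i}.Nonempty := by
    refine ⟨n, ?_⟩
    have h1 : n < p ^ n := Nat.lt_pow_self hp1
    have h2 : p ^ n ≤ s₀ * p ^ n := Nat.le_mul_of_pos_left _ hs₀pos
    simp only [Set.mem_setOf_eq]
    omega
  set i : ℕ := sInf {i : ℕ | n ≤ s₀ * p ^ i} with hi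
  have hi_mem : n ≤ s₀ * p ^ i := Nat.sInf_mem hine
  have hi_min : ∀ k : ℕ, n ≤ s₀ * p ^ k → i ≤ k := fun k hk => Nat.sInf_le hk
  -- membership of M * p^i in the splitting set of the n-th iterate
  have hMi_mem : M * p ^ i ∈ {j : ℕ | 0 < j ∧ SplitsIn (polyIter A n) j} := by
    refine ⟨Nat.mul_pos hM0 (pow_pos hp.pos i), ?_⟩
    intro y hy
    rw [ha_iter_eval] at hy
    exact hupper i y (hmono n (s₀ * p ^ i) y hi_mem hy)
  -- lower bound
  have hlow : ∀ j ∈ {j : ℕ | 0 < j ∧ SplitsIn (polyIter A n) j}, M * p ^ i ≤ j := by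
    rintro j ⟨hj0, hjsp⟩
    have hWn_j : ∀ x : K, a^[n] x = 0 → x ^ q ^ j = x := by
      intro x hx
      exact hjsp x (by rw [ha_iter_eval]; exact hx)
    have hWn_Mi : ∀ x : K, a^[n] x = 0 → x ^ q ^ (M * p ^ i) = x := by
      intro x hx
      exact hupper i x (hmono n (s₀ * p ^ i) x hi_mem hx)
    have hWn_g : ∀ x : K, a^[n] x = 0 → x ^ q ^ (Nat.gcd j (M * p ^ i)) = x := by
      intro x hx
      exact aux_pow_gcd_fix q x j (M * p ^ i) (hWn_j x hx) (hWn_Mi x hx)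
    set g : ℕ := Nat.gcd j (M * p ^ i) with hg
    have hg0 : 0 < g := Nat.gcd_pos_of_pos_left _ hj0
    -- M divides g
    have hW1_g2 : ∀ x : K, a x = 0 → x ^ q ^ (Nat.gcd g M) = x := by
      intro x hx
      refine aux_pow_gcd_fix q x g M ?_ (hW1 x hx)
      refine hWn_g x ?_
      apply hmono 1 n x (by omega)
      simpa using hx
    have hg2_mem : Nat.gcd g M ∈ {j : ℕ | 0 < j ∧ SplitsIn (polyIter A 1) j} := by
      refine ⟨Nat.gcd_pos_of_pos_right _ hM0, ?_⟩
      intro y hy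
      refine hW1_g2 y ?_
      rw [ha_iter_eval] at hy
      simpa using hy
    have hMle : M ≤ Nat.gcd g M := Nat.sInf_le hg2_mem
    have hg2M : Nat.gcd g M = M :=
      le_antisymm (Nat.le_of_dvd hM0 (Nat.gcd_dvd_right g M)) hMle
    have hMg : M ∣ g := hg2M ▸ Nat.gcd_dvd_left g M
    obtain ⟨t, ht⟩ := hMg
    have htpi : t ∣ p ^ i := by
      have h1 : g ∣ M * p ^ i := Nat.gcd_dvd_right j (M * p ^ i)
      rw [ht] at h1
      exact (Nat.mul_dvd_mul_iff_left hM0).1 h1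
    obtain ⟨k, hki, hkt⟩ := (Nat.dvd_prime_pow hp).1 htpi
    have hnk : n ≤ s₀ * p ^ k := by
      by_contra hlt
      push_neg at hlt
      apply hC2 k hlt
      intro x hx
      have h1 := hWn_g x hx
      rw [ht, hkt] at h1
      exact h1
    have hik : i ≤ k := hi_min k hnk
    have hkeq : k = i := le_antisymm hki hik
    have hgeq : g = M * p ^ i := by rw [ht, hkt, hkeq]
    calc M * p ^ i = g := hgeq.symm
      _ ≤ j := Nat.le_of_dvd hj0 (Nat.gcd_dvd_left j (M * p ^ i))
  -- conclude
  have h1 : sDeg A n ≤ M * p ^ i := Nat.sInf_le hMi_mem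
  have h2 : sDeg A n ∈ {j : ℕ | 0 < j ∧ SplitsIn (polyIter A n) j} := Nat.sInf_mem (hSne n)
  exact le_antisymm h1 (hlow _ h2)
end
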